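/- arXiv:2309.11273 — 2 statements merged into one kernel-verified Lean document; each statement's English description precedes it below -/
import Mathlib

section
/- For every real δ > 0, the integral β′ = ∫₀^δ ϖ_l(z) dz, where ϖ_l(z) = (∫_{{ξ∈ℝ³ : ‖ξ‖≤δ, ξ₃≥z}} ‖ξ‖² dξ)/(∫_{{ξ∈ℝ³ : ‖ξ‖≤δ}} ‖ξ‖² dξ), equals 5δ/24. -/
/-!
Slice the ball of radius `δ` perpendicular to the third axis: the slice at height `t` is a disk
of radius `√(δ² - t²)`, over which `t² + ‖w‖²` integrates to `π (δ⁴ - t⁴) / 2`. Integrating over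
`t ∈ [z, δ]` gives the cap moment `π/2 (δ⁴ (δ - z) - (δ⁵ - z⁵) / 5)`, while polar coordinates give
the moment `4 π δ⁵ / 5` of the whole ball. Hence `ϖ_l(z) = (4 δ⁵ - 5 δ⁴ z + z⁵) / (8 δ⁵)`, whose
integral over `[0, δ]` is `5 δ / 24`.
-/

open MeasureTheory Real Metric Module

theorem integral_closedBall_fun_norm {E : Type*} [NormedAddCommGroup E] [NormedSpace ℝ E]
    [Nontrivial E] [FiniteDimensional ℝ E] [MeasurableSpace E] [BorelSpace E] (μ : Measure E)
    [μ.IsAddHaarMeasure] (f : ℝ → ℝ) {R : ℝ} (hR : 0 ≤ R) :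
    ∫ x in closedBall (0 : E) R, f ‖x‖ ∂μ
      = finrank ℝ E * μ.real (ball 0 1) * ∫ r in 0..R, r ^ (finrank ℝ E - 1) * f r := by
  have hind : (closedBall (0 : E) R).indicator (fun x => f ‖x‖)
      = fun x => (Set.Iic R).indicator f ‖x‖ := by
    ext x
    by_cases hx : ‖x‖ ≤ R <;> simp [hx]
  have hsmul : (fun r : ℝ => r ^ (finrank ℝ E - 1) • (Set.Iic R).indicator f r)
      = (Set.Iic R).indicator fun r => r ^ (finrank ℝ E - 1) * f r := by
    ext r
    by_cases hr : r ≤ R <;> simp [hr]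
  rw [← integral_indicator measurableSet_closedBall, hind, integral_fun_norm_addHaar, hsmul,
    setIntegral_indicator measurableSet_Iic, Set.Ioi_inter_Iic,
    ← intervalIntegral.integral_of_le hR, nsmul_eq_mul, smul_eq_mul, mul_assoc]

theorem EuclideanSpace.integral_closedBall_fin_two_norm_sq_add (c : ℝ) {R : ℝ} (hR : 0 ≤ R) :
    ∫ w in closedBall (0 : EuclideanSpace ℝ (Fin 2)) R, (‖w‖ ^ 2 + c)
      = π * R ^ 2 * (R ^ 2 / 2 + c) := by
  have hvol : volume.real (ball (0 : EuclideanSpace ℝ (Fin 2)) 1) = π := by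
    simp [measureReal_def, pi_nonneg]
  have hexpand : ∀ r : ℝ, r ^ (2 - 1) * (r ^ 2 + c) = r ^ 3 + c * r := fun r => by ring
  rw [integral_closedBall_fun_norm volume (fun r => r ^ 2 + c) hR, finrank_euclideanSpace_fin,
    hvol]
  simp_rw [hexpand]
  rw [intervalIntegral.integral_add (Continuous.intervalIntegrable (by fun_prop) _ _)
      (Continuous.intervalIntegrable (by fun_prop) _ _),
    intervalIntegral.integral_const_mul, integral_pow, integral_id]
  ring

theorem EuclideanSpace.integral_closedBall_fin_three_norm_sq {R : ℝ} (hR : 0 ≤ R) :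
    ∫ ξ in closedBall (0 : EuclideanSpace ℝ (Fin 3)) R, ‖ξ‖ ^ 2 = 4 * π * R ^ 5 / 5 := by
  have hvol : volume.real (ball (0 : EuclideanSpace ℝ (Fin 3)) 1) = π * 4 / 3 := by
    simp [measureReal_def, ENNReal.toReal_ofReal (by positivity : 0 ≤ π * 4 / 3)]
  have hpow : ∀ r : ℝ, r ^ (3 - 1) * r ^ 2 = r ^ 4 := fun r => by ring
  rw [integral_closedBall_fun_norm volume (fun r => r ^ 2) hR, finrank_euclideanSpace_fin, hvol]
  simp_rw [hpow]
  rw [integral_pow]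
  ring

theorem EuclideanSpace.norm_sq_toLp_insertNth {n : ℕ} (i : Fin (n + 1)) (t : ℝ)
    (w : EuclideanSpace ℝ (Fin n)) :
    ‖WithLp.toLp 2 (Fin.insertNth i t w.ofLp : Fin (n + 1) → ℝ)‖ ^ 2 = t ^ 2 + ‖w‖ ^ 2 := by
  simp [EuclideanSpace.real_norm_sq_eq, Fin.sum_univ_succAbove _ i]

theorem EuclideanSpace.integral_eq_integral_integral_insertNth {F : Type*}
    [NormedAddCommGroup F] [NormedSpace ℝ F] {n : ℕ} (i : Fin (n + 1))
    {f : EuclideanSpace ℝ (Fin (n + 1)) → F} (hf : Integrable f) :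
    ∫ ξ, f ξ = ∫ t, ∫ w : EuclideanSpace ℝ (Fin n),
      f (WithLp.toLp 2 (Fin.insertNth i t w.ofLp : Fin (n + 1) → ℝ)) := by
  let e : EuclideanSpace ℝ (Fin (n + 1)) ≃ᵐ ℝ × EuclideanSpace ℝ (Fin n) :=
    (MeasurableEquiv.toLp 2 _).symm.trans <|
      (MeasurableEquiv.piFinSuccAbove (fun _ => ℝ) i).trans <|
        MeasurableEquiv.prodCongr (MeasurableEquiv.refl ℝ) (MeasurableEquiv.toLp 2 _)
  have he : MeasurePreserving e volume (volume.prod volume) :=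
    (EuclideanSpace.volume_preserving_symm_measurableEquiv_toLp _).trans <|
      (volume_preserving_piFinSuccAbove (fun _ => ℝ) i).trans <|
        (MeasurePreserving.id volume).prod (PiLp.volume_preserving_toLp (Fin n))
  rw [← he.symm.integral_comp', integral_prod]
  · rfl
  · exact (he.symm.integrable_comp_emb e.symm.measurableEmbedding).2 hf

theorem integral_cap_slice_norm_sq {δ z : ℝ} (hz : -δ ≤ z) (t : ℝ) :
    ∫ w : EuclideanSpace ℝ (Fin 2),
      {ξ : EuclideanSpace ℝ (Fin 3) | ‖ξ‖ ≤ δ ∧ z ≤ ξ 2}.indicator (fun ξ => ‖ξ‖ ^ 2)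
        (WithLp.toLp 2 (Fin.insertNth 2 t w.ofLp : Fin 3 → ℝ))
      = (Set.Icc z δ).indicator (fun t => π / 2 * (δ ^ 4 - t ^ 4)) t := by
  have hnorm := EuclideanSpace.norm_sq_toLp_insertNth (2 : Fin 3) t
  by_cases ht : t ∈ Set.Icc z δ
  · obtain ⟨hzt, htδ⟩ := id ht
    have hδ : 0 ≤ δ := by linarith
    have hR2 : 0 ≤ δ ^ 2 - t ^ 2 := by nlinarith
    set R := √(δ ^ 2 - t ^ 2)
    have hslice : ∀ w : EuclideanSpace ℝ (Fin 2),
        {ξ : EuclideanSpace ℝ (Fin 3) | ‖ξ‖ ≤ δ ∧ z ≤ ξ 2}.indicator (fun ξ => ‖ξ‖ ^ 2)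
          (WithLp.toLp 2 (Fin.insertNth 2 t w.ofLp : Fin 3 → ℝ))
        = (closedBall 0 R).indicator (fun w => ‖w‖ ^ 2 + t ^ 2) w := by
      intro w
      have hmem : ‖WithLp.toLp 2 (Fin.insertNth 2 t w.ofLp : Fin 3 → ℝ)‖ ≤ δ ↔ ‖w‖ ≤ R := by
        rw [← sq_le_sq₀ (norm_nonneg _) hδ, hnorm, Real.le_sqrt (norm_nonneg _) hR2]
        constructor <;> intro h <;> linarith
      simp [Set.indicator, hmem, hzt, hnorm, add_comm]
    simp_rw [hslice]
    rw [integral_indicator measurableSet_closedBall,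
      EuclideanSpace.integral_closedBall_fin_two_norm_sq_add _ (Real.sqrt_nonneg _),
      Real.sq_sqrt hR2, Set.indicator_of_mem ht]
    ring
  · have hout : ∀ w : EuclideanSpace ℝ (Fin 2),
        WithLp.toLp 2 (Fin.insertNth 2 t w.ofLp : Fin 3 → ℝ)
          ∉ {ξ : EuclideanSpace ℝ (Fin 3) | ‖ξ‖ ≤ δ ∧ z ≤ ξ 2} := by
      rintro w ⟨hle, hzle⟩
      refine ht ⟨by simpa using hzle, ?_⟩
      nlinarith [hnorm w, norm_nonneg w,
        norm_nonneg (WithLp.toLp 2 (Fin.insertNth 2 t w.ofLp : Fin 3 → ℝ))]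
    simp [Set.indicator_of_notMem (hout _), Set.indicator_of_notMem ht]

theorem setIntegral_cap_norm_sq {δ z : ℝ} (hz : -δ ≤ z) (hzδ : z ≤ δ) :
    ∫ ξ in {ξ : EuclideanSpace ℝ (Fin 3) | ‖ξ‖ ≤ δ ∧ z ≤ ξ 2}, ‖ξ‖ ^ 2
      = π / 2 * (δ ^ 4 * (δ - z) - (δ ^ 5 - z ^ 5) / 5) := by
  have hS : MeasurableSet {ξ : EuclideanSpace ℝ (Fin 3) | ‖ξ‖ ≤ δ ∧ z ≤ ξ 2} := by
    measurability
  have hint : IntegrableOn (fun ξ => ‖ξ‖ ^ 2)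
      {ξ : EuclideanSpace ℝ (Fin 3) | ‖ξ‖ ≤ δ ∧ z ≤ ξ 2} :=
    ((continuous_norm.pow 2).continuousOn.integrableOn_compact
      (isCompact_closedBall 0 δ)).mono_set fun ξ hξ => mem_closedBall_zero_iff.2 hξ.1
  rw [← integral_indicator hS, EuclideanSpace.integral_eq_integral_integral_insertNth 2
    ((integrable_indicator_iff hS).2 hint)]
  simp_rw [integral_cap_slice_norm_sq hz]
  rw [integral_indicator measurableSet_Icc, integral_Icc_eq_integral_Ioc,
    ← intervalIntegral.integral_of_le hzδ, intervalIntegral.integral_const_mul,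
    intervalIntegral.integral_sub intervalIntegrable_const
      (intervalIntegral.intervalIntegrable_pow 4),
    intervalIntegral.integral_const, integral_pow, smul_eq_mul]
  ring

theorem integral_cap_norm_sq_div_ball_norm_sq {δ : ℝ} (hδ : 0 < δ) :
    ∫ z in (0:ℝ)..δ, π / 2 * (δ ^ 4 * (δ - z) - (δ ^ 5 - z ^ 5) / 5) / (4 * π * δ ^ 5 / 5)
      = 5 * δ / 24 := by
  have hpoly : ∫ z in (0:ℝ)..δ, (δ ^ 4 * (δ - z) - (δ ^ 5 - z ^ 5) / 5) = δ ^ 6 / 3 := by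
    have hexpand : ∀ z : ℝ, δ ^ 4 * (δ - z) - (δ ^ 5 - z ^ 5) / 5
        = 4 / 5 * δ ^ 5 - δ ^ 4 * z + z ^ 5 / 5 := fun z => by ring
    simp_rw [hexpand]
    rw [intervalIntegral.integral_add (Continuous.intervalIntegrable (by fun_prop) _ _)
        (Continuous.intervalIntegrable (by fun_prop) _ _),
      intervalIntegral.integral_sub intervalIntegrable_const
        (intervalIntegral.intervalIntegrable_id.const_mul _),
      intervalIntegral.integral_const, intervalIntegral.integral_const_mul, integral_id,
      intervalIntegral.integral_div, integral_pow, smul_eq_mul]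
    ring
  rw [intervalIntegral.integral_div, intervalIntegral.integral_const_mul, hpoly]
  field_simp
  ring

theorem beta_prime_3d (δ : ℝ) (hδ : 0 < δ) :
    (∫ z in (0:ℝ)..δ,
      (∫ ξ in {ξ : EuclideanSpace ℝ (Fin 3) | ‖ξ‖ ≤ δ ∧ z ≤ ξ 2}, ‖ξ‖ ^ 2) /
        (∫ ξ in {ξ : EuclideanSpace ℝ (Fin 3) | ‖ξ‖ ≤ δ}, ‖ξ‖ ^ 2))
      = 5 * δ / 24 := by
  have hball :
      ∫ ξ in {ξ : EuclideanSpace ℝ (Fin 3) | ‖ξ‖ ≤ δ}, ‖ξ‖ ^ 2 = 4 * π * δ ^ 5 / 5 := by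
    rw [← EuclideanSpace.integral_closedBall_fin_three_norm_sq hδ.le]
    congr
    ext ξ
    simp
  calc
    _ = ∫ z in (0:ℝ)..δ,
        π / 2 * (δ ^ 4 * (δ - z) - (δ ^ 5 - z ^ 5) / 5) / (4 * π * δ ^ 5 / 5) := by
      refine intervalIntegral.integral_congr fun z hz => ?_
      rw [Set.uIcc_of_le hδ.le] at hz
      simp only [hball, setIntegral_cap_norm_sq (by linarith [hz.1]) hz.2]
    _ = 5 * δ / 24 := integral_cap_norm_sq_div_ball_norm_sq hδ
end

section
/- For every real δ > 0 and every z with 0 ≤ z ≤ δ, the ratio ϖ_l(z) = m_l(z)/m, where m_l(z) = ∫_{{ξ∈ℝ² : ‖ξ‖≤δ, ξ₂≥z}} ‖ξ‖² dξ and m = ∫_{{ξ∈ℝ² : ‖ξ‖≤δ}} ‖ξ‖² dξ, equals (1/π)·[arccos(z/δ) − z(δ² − z²)^{3/2}/(3δ⁴) − z³√(δ² − z²)/δ⁴]. -/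
/-!
Slice the segment by horizontal chords (Fubini): the chord at height `y` has half-length
`s = √(δ² - y²)` and carries `∫_{-s}^{s} (x² + y²) dx = 2s³/3 + 2y²s`. The closed form
`G(y) = δ⁴/2 · arccos(y/δ) - y s³/6 - y³ s/2` is an antiderivative of minus this, so by the
fundamental theorem of calculus the segment above height `a` has moment `G(a) - G(δ) = G(a)`.
The whole disc is the segment above `-δ`, with moment `G(-δ) = π δ⁴/2`.
-/

open MeasureTheory Real Set

theorem integral_sq_add_const_neg_self (s c : ℝ) :
    ∫ x in -s..s, (x ^ 2 + c) = 2 / 3 * s ^ 3 + 2 * c * s := by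
  rw [intervalIntegral.integral_add (intervalIntegral.intervalIntegrable_pow 2)
    intervalIntegrable_const, integral_pow, intervalIntegral.integral_const, smul_eq_mul]
  ring

theorem hasDerivAt_sqrt_sq_sub {δ y : ℝ} (hy : y ^ 2 < δ ^ 2) :
    HasDerivAt (fun y => √(δ ^ 2 - y ^ 2)) (-y / √(δ ^ 2 - y ^ 2)) y := by
  have h := ((hasDerivAt_pow 2 y).const_sub (δ ^ 2)).sqrt (sub_pos.2 hy).ne'
  convert h using 1
  field_simp
  ring

theorem hasDerivAt_arccos_div {δ y : ℝ} (hy : |y| < δ) :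
    HasDerivAt (fun y => arccos (y / δ)) (-1 / √(δ ^ 2 - y ^ 2)) y := by
  obtain ⟨hlo, hhi⟩ := abs_lt.1 hy
  have hδ : 0 < δ := (abs_nonneg y).trans_lt hy
  have h := (hasDerivAt_arccos (x := y / δ) (by rw [ne_eq, div_eq_iff hδ.ne']; linarith)
    (by rw [ne_eq, div_eq_iff hδ.ne']; linarith)).comp y ((hasDerivAt_id y).div_const δ)
  have hroot : √(1 - (y / δ) ^ 2) = √(δ ^ 2 - y ^ 2) / δ := by
    rw [show 1 - (y / δ) ^ 2 = (δ ^ 2 - y ^ 2) / δ ^ 2 by field_simp,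
      sqrt_div' _ (sq_nonneg δ), sqrt_sq hδ.le]
  refine h.congr_deriv ?_
  rw [hroot]
  field_simp

noncomputable def chordMoment (δ y : ℝ) : ℝ :=
  2 / 3 * √(δ ^ 2 - y ^ 2) ^ 3 + 2 * y ^ 2 * √(δ ^ 2 - y ^ 2)

noncomputable def segmentMoment (δ a : ℝ) : ℝ :=
  δ ^ 4 / 2 * arccos (a / δ) - a * √(δ ^ 2 - a ^ 2) ^ 3 / 6 - a ^ 3 * √(δ ^ 2 - a ^ 2) / 2

theorem hasDerivAt_segmentMoment {δ y : ℝ} (hy : |y| < δ) :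
    HasDerivAt (segmentMoment δ) (-chordMoment δ y) y := by
  have hy2 : y ^ 2 < δ ^ 2 := sq_lt_sq' (abs_lt.1 hy).1 (abs_lt.1 hy).2
  have hs := hasDerivAt_sqrt_sq_sub hy2
  have h := (((hasDerivAt_arccos_div hy).const_mul (δ ^ 4 / 2)).sub
    (((hasDerivAt_id y).mul (hs.pow 3)).div_const 6)).sub
    (((hasDerivAt_pow 3 y).mul hs).div_const 2)
  refine h.congr_deriv ?_
  simp only [chordMoment, id, Pi.pow_apply]
  have hpos : 0 < √(δ ^ 2 - y ^ 2) := sqrt_pos.2 (sub_pos.2 hy2)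
  have hδ4 : δ ^ 4 = (√(δ ^ 2 - y ^ 2) ^ 2 + y ^ 2) ^ 2 := by
    rw [sq_sqrt (sub_pos.2 hy2).le]; ring
  rw [hδ4]
  field_simp
  ring

theorem continuous_segmentMoment (δ : ℝ) : Continuous (segmentMoment δ) := by
  unfold segmentMoment
  fun_prop

theorem integral_chordMoment {δ a : ℝ} (ha : -δ ≤ a) (haδ : a ≤ δ) :
    ∫ y in a..δ, chordMoment δ y = segmentMoment δ a := by
  have hftc := intervalIntegral.integral_eq_sub_of_hasDerivAt_of_le haδ
    (continuous_segmentMoment δ).continuousOn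
    (fun y hy => hasDerivAt_segmentMoment (abs_lt.2 ⟨ha.trans_lt hy.1, hy.2⟩))
    (by unfold chordMoment; exact Continuous.intervalIntegrable (by fun_prop) _ _)
  have hend : segmentMoment δ δ = 0 := by
    rcases eq_or_ne δ 0 with hδ | hδ <;> simp [segmentMoment, hδ]
  rw [intervalIntegral.integral_neg, hend] at hftc
  linarith

theorem segmentMoment_neg_self {δ : ℝ} (hδ : δ ≠ 0) : segmentMoment δ (-δ) = π * δ ^ 4 / 2 := by
  simp [segmentMoment, neg_div, div_self hδ]
  ring

def circularSegment (δ a : ℝ) : Set (ℝ × ℝ) := {p | p.1 ^ 2 + p.2 ^ 2 ≤ δ ^ 2 ∧ a ≤ p.2}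

theorem isCompact_circularSegment (δ a : ℝ) : IsCompact (circularSegment δ a) := by
  refine Metric.isCompact_of_isClosed_isBounded ?_
    ((Metric.isBounded_closedBall (x := 0) (r := |δ|)).subset ?_)
  · exact (isClosed_le (f := fun p : ℝ × ℝ => p.1 ^ 2 + p.2 ^ 2) (by fun_prop)
      continuous_const).inter
      (isClosed_le continuous_const continuous_snd)
  · rintro p ⟨hp, -⟩
    simp only [Metric.mem_closedBall, dist_zero_right, Prod.norm_def, Real.norm_eq_abs,
      max_le_iff]
    constructor <;> apply sq_le_sq.1 <;> nlinarith [sq_nonneg p.1, sq_nonneg p.2]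

theorem mk_mem_circularSegment_iff {δ a : ℝ} (hδ : 0 ≤ δ) (ha : -δ ≤ a) (x y : ℝ) :
    (x, y) ∈ circularSegment δ a ↔
      y ∈ Icc a δ ∧ x ∈ Icc (-√(δ ^ 2 - y ^ 2)) √(δ ^ 2 - y ^ 2) := by
  simp only [circularSegment, mem_ofPred_eq, mem_Icc]
  constructor
  · rintro ⟨hxy, hay⟩
    have hyδ : y ≤ δ := abs_le_of_sq_le_sq' (by nlinarith [sq_nonneg x]) hδ |>.2
    exact ⟨⟨hay, hyδ⟩, (Real.sq_le (by nlinarith)).1 (by linarith)⟩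
  · rintro ⟨⟨hay, hyδ⟩, hx⟩
    have hx2 := (Real.sq_le (by nlinarith)).2 hx
    exact ⟨by linarith, hay⟩

theorem setIntegral_circularSegment {f : ℝ × ℝ → ℝ} (hf : Continuous f) {δ a : ℝ}
    (ha : -δ ≤ a) (haδ : a ≤ δ) :
    ∫ p in circularSegment δ a, f p =
      ∫ y in a..δ, ∫ x in -√(δ ^ 2 - y ^ 2)..√(δ ^ 2 - y ^ 2), f (x, y) := by
  have hδ : 0 ≤ δ := by linarith
  have hmeas : MeasurableSet (circularSegment δ a) :=
    (isCompact_circularSegment δ a).isClosed.measurableSet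
  have hint : Integrable ((circularSegment δ a).indicator f) (volume.prod volume) := by
    rw [← Measure.volume_eq_prod, integrable_indicator_iff hmeas]
    exact hf.continuousOn.integrableOn_compact (isCompact_circularSegment δ a)
  have hslice (y : ℝ) : ∫ x, (circularSegment δ a).indicator f (x, y) =
      (Icc a δ).indicator (fun y => ∫ x in -√(δ ^ 2 - y ^ 2)..√(δ ^ 2 - y ^ 2), f (x, y)) y := by
    by_cases hy : y ∈ Icc a δ
    · have hfun : (fun x => (circularSegment δ a).indicator f (x, y)) =
          (Icc (-√(δ ^ 2 - y ^ 2)) √(δ ^ 2 - y ^ 2)).indicator (fun x => f (x, y)) := by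
        ext x
        have hmem := mk_mem_circularSegment_iff hδ ha x y
        by_cases hx : x ∈ Icc (-√(δ ^ 2 - y ^ 2)) √(δ ^ 2 - y ^ 2)
        · rw [indicator_of_mem hx, indicator_of_mem (hmem.2 ⟨hy, hx⟩)]
        · rw [indicator_of_notMem hx, indicator_of_notMem fun h => hx (hmem.1 h).2]
      rw [hfun, integral_indicator measurableSet_Icc, indicator_of_mem hy,
        integral_Icc_eq_integral_Ioc,
        intervalIntegral.integral_of_le (neg_le_self (sqrt_nonneg _))]
    · simp [mk_mem_circularSegment_iff hδ ha, hy]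
  rw [← integral_indicator hmeas, Measure.volume_eq_prod, integral_prod_symm _ hint,
    integral_congr_ae (.of_forall hslice), integral_indicator measurableSet_Icc,
    integral_Icc_eq_integral_Ioc, ← intervalIntegral.integral_of_le haδ]

noncomputable def euclideanSpaceFinTwoEquivProd : EuclideanSpace ℝ (Fin 2) ≃ᵐ ℝ × ℝ :=
  (MeasurableEquiv.toLp 2 (Fin 2 → ℝ)).symm.trans MeasurableEquiv.finTwoArrow

theorem measurePreserving_euclideanSpaceFinTwoEquivProd_symm :
    MeasurePreserving euclideanSpaceFinTwoEquivProd.symm :=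
  ((volume_preserving_finTwoArrow ℝ).comp
    (EuclideanSpace.volume_preserving_symm_measurableEquiv_toLp (Fin 2))).symm _

theorem euclideanSpaceFinTwoEquivProd_symm_apply_one (p : ℝ × ℝ) :
    euclideanSpaceFinTwoEquivProd.symm p 1 = p.2 := rfl

theorem norm_sq_euclideanSpaceFinTwoEquivProd_symm (p : ℝ × ℝ) :
    ‖euclideanSpaceFinTwoEquivProd.symm p‖ ^ 2 = p.1 ^ 2 + p.2 ^ 2 := by
  rw [EuclideanSpace.norm_sq_eq, Fin.sum_univ_two]
  simp only [Real.norm_eq_abs, sq_abs]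
  rfl

theorem setIntegral_norm_sq_eq_circularSegment {δ : ℝ} (hδ : 0 ≤ δ) (a : ℝ) :
    ∫ ξ in {ξ : EuclideanSpace ℝ (Fin 2) | ‖ξ‖ ≤ δ ∧ a ≤ ξ 1}, ‖ξ‖ ^ 2 =
      ∫ p in circularSegment δ a, (p.1 ^ 2 + p.2 ^ 2) := by
  have hpre : euclideanSpaceFinTwoEquivProd.symm ⁻¹' {ξ | ‖ξ‖ ≤ δ ∧ a ≤ ξ 1} =
      circularSegment δ a := by
    ext p
    simp only [mem_preimage, mem_ofPred_eq, circularSegment,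
      euclideanSpaceFinTwoEquivProd_symm_apply_one, ← norm_sq_euclideanSpaceFinTwoEquivProd_symm,
      sq_le_sq₀ (norm_nonneg _) hδ]
  rw [← measurePreserving_euclideanSpaceFinTwoEquivProd_symm.setIntegral_preimage_emb
    euclideanSpaceFinTwoEquivProd.symm.measurableEmbedding, hpre]
  simp only [norm_sq_euclideanSpaceFinTwoEquivProd_symm]

theorem setIntegral_norm_sq_eq_segmentMoment {δ a : ℝ} (ha : -δ ≤ a) (haδ : a ≤ δ) :
    ∫ ξ in {ξ : EuclideanSpace ℝ (Fin 2) | ‖ξ‖ ≤ δ ∧ a ≤ ξ 1}, ‖ξ‖ ^ 2 = segmentMoment δ a := by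
  rw [setIntegral_norm_sq_eq_circularSegment (by linarith) a,
    setIntegral_circularSegment (by fun_prop) ha haδ]
  simp only [integral_sq_add_const_neg_self]
  exact integral_chordMoment ha haδ

theorem circular_segment_moment_ratio (δ z : ℝ) (hδ : 0 < δ) (hz0 : 0 ≤ z) (hzδ : z ≤ δ) :
    (∫ ξ in {ξ : EuclideanSpace ℝ (Fin 2) | ‖ξ‖ ≤ δ ∧ z ≤ ξ 1}, ‖ξ‖ ^ 2) /
      (∫ ξ in {ξ : EuclideanSpace ℝ (Fin 2) | ‖ξ‖ ≤ δ}, ‖ξ‖ ^ 2)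
      = (1 / π) * (Real.arccos (z / δ)
          - z * (δ ^ 2 - z ^ 2) ^ ((3 : ℝ) / 2) / (3 * δ ^ 4)
          - z ^ 3 * Real.sqrt (δ ^ 2 - z ^ 2) / δ ^ 4) := by
  have hdisc : {ξ : EuclideanSpace ℝ (Fin 2) | ‖ξ‖ ≤ δ} = {ξ | ‖ξ‖ ≤ δ ∧ -δ ≤ ξ 1} := by
    ext ξ
    exact ⟨fun h => ⟨h, (abs_le.1 ((PiLp.norm_apply_le ξ 1).trans h)).1⟩, And.left⟩
  rw [hdisc, setIntegral_norm_sq_eq_segmentMoment (by linarith) hzδ,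
    setIntegral_norm_sq_eq_segmentMoment le_rfl (by linarith), segmentMoment_neg_self hδ.ne',
    rpow_div_two_eq_sqrt 3 (by nlinarith), rpow_ofNat, segmentMoment]
  field_simp
  ring
end
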